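/- Let m ≥ 1, δ ≥ 1/(2m−1), and let D_m, D_n, D_1 : [0,T] → [1,∞) be measurable with D_n² ≤ D_m^{(4m-3)/(2m-1)} D_1^{1/(2m-1)} pointwise. Then ⟨D_n² D_m^{δ−2}⟩_T ≤ ((2m−1)δ − 1)/((2m−1)δ) · ⟨D_m^δ⟩_T + 1/((2m−1)δ) · ⟨D_1^δ⟩_T. -/

import Mathlib

/-! The pointwise bound on `D_n²` turns `D_n² D_m^{δ-2}` into the geometric mean
`(D_m^δ)^{1-w} (D_1^δ)^w` with `w = 1/((2m-1)δ) ∈ [0, 1]`; weighted AM–GM bounds it by the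
arithmetic mean, and averaging over `[0, T]` preserves the inequality. -/

open Real

lemma rpow_mul_rpow_le_weighted_mean {x y δ w : ℝ} (hx : 0 ≤ x) (hy : 0 ≤ y)
    (hw₀ : 0 ≤ w) (hw₁ : w ≤ 1) :
    x ^ (δ * (1 - w)) * y ^ (δ * w) ≤ (1 - w) * x ^ δ + w * y ^ δ := by
  rw [rpow_mul hx, rpow_mul hy]
  exact geom_mean_le_arith_mean2_weighted (by linarith) hw₀ (rpow_nonneg hx δ)
    (rpow_nonneg hy δ) (by ring)

lemma sq_mul_rpow_le_of_sq_le {m x y z : ℝ} (δ : ℝ) (hm : 2 * m - 1 ≠ 0) (hx : 0 < x)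
    (h : y ^ (2 : ℝ) ≤ x ^ ((4 * m - 3) / (2 * m - 1)) * z ^ (1 / (2 * m - 1))) :
    y ^ (2 : ℝ) * x ^ (δ - 2) ≤ x ^ (δ - 1 / (2 * m - 1)) * z ^ (1 / (2 * m - 1)) :=
  calc y ^ (2 : ℝ) * x ^ (δ - 2)
      ≤ x ^ ((4 * m - 3) / (2 * m - 1)) * z ^ (1 / (2 * m - 1)) * x ^ (δ - 2) :=
        mul_le_mul_of_nonneg_right h (rpow_nonneg hx.le _)
    _ = x ^ (δ - 1 / (2 * m - 1)) * z ^ (1 / (2 * m - 1)) := by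
        have hexp : (4 * m - 3) / (2 * m - 1) = 2 - 1 / (2 * m - 1) := by
          rw [eq_sub_iff_add_eq, ← add_div, div_eq_iff hm]
          ring
        rw [mul_right_comm, ← rpow_add hx, hexp]
        ring_nf

lemma intervalAverage_le_of_le {f g h : ℝ → ℝ} {T a b : ℝ} (hT : 0 ≤ T)
    (hf : IntervalIntegrable f MeasureTheory.volume 0 T)
    (hg : IntervalIntegrable g MeasureTheory.volume 0 T)
    (hh : IntervalIntegrable h MeasureTheory.volume 0 T)
    (hfgh : ∀ t, f t ≤ a * g t + b * h t) :
    (1 / T) * ∫ t in (0 : ℝ)..T, f t ≤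
      a * ((1 / T) * ∫ t in (0 : ℝ)..T, g t) + b * ((1 / T) * ∫ t in (0 : ℝ)..T, h t) := by
  have hgh := (hg.const_mul a).add (hh.const_mul b)
  have hint := intervalIntegral.integral_mono_on hT hf hgh fun t _ => hfgh t
  rw [intervalIntegral.integral_add (hg.const_mul a) (hh.const_mul b),
    intervalIntegral.integral_const_mul, intervalIntegral.integral_const_mul] at hint
  calc (1 / T) * ∫ t in (0 : ℝ)..T, f t
      ≤ (1 / T) * (a * (∫ t in (0 : ℝ)..T, g t) + b * ∫ t in (0 : ℝ)..T, h t) :=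
        mul_le_mul_of_nonneg_left hint (by positivity)
    _ = _ := by ring

theorem stmt12_general (m : ℕ) (hm : 1 ≤ m) (T δ : ℝ) (hT : 0 < T)
    (hδ : 1 / (2 * (m : ℝ) - 1) ≤ δ)
    (Dm Dn D1 : ℝ → ℝ)
    (hDm : ∀ t, 1 ≤ Dm t) (hD1 : ∀ t, 1 ≤ D1 t)
    (hpt : ∀ t, Dn t ^ (2 : ℝ) ≤
      Dm t ^ ((4 * (m : ℝ) - 3) / (2 * (m : ℝ) - 1)) * D1 t ^ (1 / (2 * (m : ℝ) - 1)))
    (h1 : IntervalIntegrable (fun t => Dn t ^ (2 : ℝ) * Dm t ^ (δ - 2)) MeasureTheory.volume 0 T)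
    (h2 : IntervalIntegrable (fun t => Dm t ^ δ) MeasureTheory.volume 0 T)
    (h3 : IntervalIntegrable (fun t => D1 t ^ δ) MeasureTheory.volume 0 T) :
    (1 / T) * ∫ t in (0 : ℝ)..T, Dn t ^ (2 : ℝ) * Dm t ^ (δ - 2) ≤
      ((2 * (m : ℝ) - 1) * δ - 1) / ((2 * (m : ℝ) - 1) * δ) *
        ((1 / T) * ∫ t in (0 : ℝ)..T, Dm t ^ δ) +
      1 / ((2 * (m : ℝ) - 1) * δ) * ((1 / T) * ∫ t in (0 : ℝ)..T, D1 t ^ δ) := by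
  set c : ℝ := 2 * (m : ℝ) - 1
  have hc : 0 < c := by
    have : (1 : ℝ) ≤ m := by exact_mod_cast hm
    linarith
  have hcδ : 1 ≤ c * δ := by rwa [div_le_iff₀' hc] at hδ
  have hδ₀ : 0 < δ := pos_of_mul_pos_right (one_pos.trans_le hcδ) hc.le
  set w := 1 / (c * δ) with hw
  have hw₀ : 0 ≤ w := by positivity
  have hw₁ : w ≤ 1 := div_le_one_of_le₀ hcδ (by positivity)
  have hcoeff : (c * δ - 1) / (c * δ) = 1 - w := by rw [hw]; field_simp
  have hexp₀ : δ - 1 / c = δ * (1 - w) := by rw [hw]; field_simp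
  have hexp₁ : 1 / c = δ * w := by rw [hw]; field_simp
  rw [hcoeff]
  refine intervalAverage_le_of_le hT.le h1 h2 h3 fun t => ?_
  have hDm₀ : 0 < Dm t := one_pos.trans_le (hDm t)
  calc Dn t ^ (2 : ℝ) * Dm t ^ (δ - 2) ≤ Dm t ^ (δ - 1 / c) * D1 t ^ (1 / c) :=
        sq_mul_rpow_le_of_sq_le δ hc.ne' hDm₀ (hpt t)
    _ ≤ (1 - w) * Dm t ^ δ + w * D1 t ^ δ := by
        rw [hexp₀, hexp₁]
        exact rpow_mul_rpow_le_weighted_mean hDm₀.le (zero_le_one.trans (hD1 t)) hw₀ hw₁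

theorem stmt12 (m : ℕ) (hm : 1 ≤ m) (T δ : ℝ) (hT : 0 < T)
    (hδ : 1 / (2 * (m : ℝ) - 1) ≤ δ)
    (Dm Dn D1 : ℝ → ℝ)
    (hDm : ∀ t, 1 ≤ Dm t) (hDn : ∀ t, 1 ≤ Dn t) (hD1 : ∀ t, 1 ≤ D1 t)
    (hpt : ∀ t, Dn t ^ (2 : ℝ) ≤
      Dm t ^ ((4 * (m : ℝ) - 3) / (2 * (m : ℝ) - 1)) * D1 t ^ (1 / (2 * (m : ℝ) - 1)))
    (h1 : IntervalIntegrable (fun t => Dn t ^ (2 : ℝ) * Dm t ^ (δ - 2)) MeasureTheory.volume 0 T)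
    (h2 : IntervalIntegrable (fun t => Dm t ^ δ) MeasureTheory.volume 0 T)
    (h3 : IntervalIntegrable (fun t => D1 t ^ δ) MeasureTheory.volume 0 T) :
    (1 / T) * ∫ t in (0 : ℝ)..T, Dn t ^ (2 : ℝ) * Dm t ^ (δ - 2) ≤
      ((2 * (m : ℝ) - 1) * δ - 1) / ((2 * (m : ℝ) - 1) * δ) *
        ((1 / T) * ∫ t in (0 : ℝ)..T, Dm t ^ δ) +
      1 / ((2 * (m : ℝ) - 1) * δ) * ((1 / T) * ∫ t in (0 : ℝ)..T, D1 t ^ δ) :=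
  stmt12_general m hm T δ hT hδ Dm Dn D1 hDm hD1 hpt h1 h2 h3
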